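/- arXiv:1112.6317 — 3 statements merged into one kernel-verified Lean document; each statement's English description precedes it below -/
import Mathlib

section
/- Let C be a nonsingular plane cubic F = 0 over an algebraically closed field of characteristic 0 whose Hessian He(C) is also nonsingular. Then the involution ι on He(C), sending a to the unique singular point of the degenerate conic P_a(C), has no fixed points. -/
/-!
The Hessian matrix `F''(a)` applied to `a` is, by Euler's identity for the quadratic forms
`∂ᵢF`, twice the gradient of `F` at `a`. So a fixed point of `ι` would be a point where the
gradient of `F` vanishes; by Euler's identity for `F` itself it lies on `C`, i.e. it is a
singular point of `C`.
-/

open MvPolynomial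

namespace MvPolynomial

variable {R σ : Type*}

theorem pderiv_comm [CommRing R] (i j : σ) (p : MvPolynomial σ R) :
    pderiv i (pderiv j p) = pderiv j (pderiv i p) := by
  -- the commutator is again a derivation, and it kills every variable
  have hcomm : ⁅(pderiv i : Derivation R (MvPolynomial σ R) (MvPolynomial σ R)), pderiv j⁆ = 0 :=
    derivation_ext fun k => by
      classical
      rw [Derivation.commutator_apply]
      simp [pderiv_X, Pi.single_apply, apply_ite]
  have hp := DFunLike.congr_fun hcomm p
  rw [Derivation.commutator_apply] at hp
  exact sub_eq_zero.mp hp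

variable [Fintype σ]

theorem IsHomogeneous.sum_mul_eval_pderiv [CommSemiring R] {φ : MvPolynomial σ R} {n : ℕ}
    (h : φ.IsHomogeneous n) (a : σ → R) :
    ∑ i, a i * eval a (pderiv i φ) = n * eval a φ := by
  simpa [nsmul_eq_mul] using congrArg (eval a) h.sum_X_mul_pderiv

theorem IsHomogeneous.hessian_mulVec [CommRing R] {F : MvPolynomial σ R} {n : ℕ}
    (h : F.IsHomogeneous n) (a : σ → R) :
    (Matrix.of fun i j => eval a (pderiv i (pderiv j F))).mulVec a =
      fun i => ((n - 1 : ℕ) : R) * eval a (pderiv i F) := by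
  ext i
  rw [← h.pderiv.sum_mul_eval_pderiv a]
  simp only [Matrix.mulVec, dotProduct, Matrix.of_apply, pderiv_comm i, mul_comm]

end MvPolynomial

theorem hessian_involution_fixed_point_free_general {K : Type*} [Field K] [CharZero K]
    (F : MvPolynomial (Fin 3) K) (hF : F.IsHomogeneous 3)
    (hC : ∀ a : Fin 3 → K, a ≠ 0 → eval a F = 0 →
      ∃ i : Fin 3, eval a (pderiv i F) ≠ 0) :
    ¬ ∃ a : Fin 3 → K, a ≠ 0 ∧
        Matrix.det (Matrix.of fun i j : Fin 3 => eval a (pderiv i (pderiv j F))) = 0 ∧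
        (Matrix.of fun i j : Fin 3 => eval a (pderiv i (pderiv j F))).mulVec a = 0 := by
  rintro ⟨a, ha, -, hfix⟩
  have hgrad : ∀ i, eval a (pderiv i F) = 0 := fun i => by
    simpa using congrFun ((hF.hessian_mulVec a).symm.trans hfix) i
  have hFa : eval a F = 0 := by
    simpa [hgrad] using (hF.sum_mul_eval_pderiv a).symm
  obtain ⟨i, hi⟩ := hC a ha hFa
  exact hi (hgrad i)

/-- Let `C : F = 0` be a nonsingular plane cubic over an algebraically closed field of
characteristic 0 whose Hessian curve `He(C) : det F''(x) = 0` is also nonsingular.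
Then the involution `ι` on `He(C)`, sending `a` to the unique singular point of the
degenerate polar conic `P_a(C)`, has no fixed points: there is no nonzero `a` on
`He(C)` with `F''(a)·a = 0`. -/
theorem hessian_involution_fixed_point_free {K : Type*} [Field K] [IsAlgClosed K] [CharZero K]
    (F : MvPolynomial (Fin 3) K) (hF : F.IsHomogeneous 3)
    (hC : ∀ a : Fin 3 → K, a ≠ 0 → eval a F = 0 →
      ∃ i : Fin 3, eval a (pderiv i F) ≠ 0)
    (hHe : ∀ a : Fin 3 → K, a ≠ 0 →
      eval a (Matrix.det (Matrix.of fun i j : Fin 3 =>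
        (pderiv i (pderiv j F) : MvPolynomial (Fin 3) K))) = 0 →
      ∃ i : Fin 3, eval a (pderiv i (Matrix.det (Matrix.of fun i j : Fin 3 =>
        (pderiv i (pderiv j F) : MvPolynomial (Fin 3) K)))) ≠ 0) :
    ¬ ∃ a : Fin 3 → K, a ≠ 0 ∧
        Matrix.det (Matrix.of fun i j : Fin 3 => eval a (pderiv i (pderiv j F))) = 0 ∧
        (Matrix.of fun i j : Fin 3 => eval a (pderiv i (pderiv j F))).mulVec a = 0 :=
  hessian_involution_fixed_point_free_general F hF hC
end

section
/- Let E₀: y² = x³ + Ax + B be an elliptic curve over a field k of characteristic 0 with A ≠ 0 and δ = 4A³ + 27B² ≠ 0. Then the map ψ₁ sending (X, Y) to (x, y) = (−(X³+4B)/(3X²+4A), (X³+4AX−8B)·Y/(3X²+4A)²) maps the curve C: Y² = −(3X²+4A)(X³+AX+B) into E₀; i.e., the images satisfy y² = x³ + Ax + B identically modulo the equation of C. -/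
/-! Substituting the equation of `C` for `Y²` and clearing the denominator `(3X² + 4A)⁴`, one factor
`3X² + 4A` cancels from both sides and the claim becomes a polynomial identity with integer
coefficients. -/

theorem psi1_denominators_cleared {R : Type*} [CommRing R] (A B X : R) :
    (X ^ 3 + 4 * A * X - 8 * B) ^ 2 * (X ^ 3 + A * X + B)
      = (X ^ 3 + 4 * B) ^ 3 + A * (X ^ 3 + 4 * B) * (3 * X ^ 2 + 4 * A) ^ 2
        - B * (3 * X ^ 2 + 4 * A) ^ 3 := by
  ring

theorem psi1_maps_into_E0_general {K : Type*} [Field K]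
    (A B X Y : K)
    (hC : Y ^ 2 = -(3 * X ^ 2 + 4 * A) * (X ^ 3 + A * X + B))
    (hden : 3 * X ^ 2 + 4 * A ≠ 0) :
    ((X ^ 3 + 4 * A * X - 8 * B) * Y / (3 * X ^ 2 + 4 * A) ^ 2) ^ 2
      = (-(X ^ 3 + 4 * B) / (3 * X ^ 2 + 4 * A)) ^ 3
        + A * (-(X ^ 3 + 4 * B) / (3 * X ^ 2 + 4 * A)) + B := by
  -- `field_simp` rewrites the denominator into this form before looking for its nonvanishing
  have hden' : X ^ 2 * 3 + 4 * A ≠ 0 := by rwa [mul_comm] at hden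
  rw [div_pow, mul_pow, hC]
  field_simp
  linear_combination psi1_denominators_cleared A B X

/-- Let `E₀ : y² = x³ + Ax + B` with `A ≠ 0` and `δ = 4A³ + 27B² ≠ 0`.  The map
`ψ₁ : (X, Y) ↦ (−(X³+4B)/(3X²+4A), (X³+4AX−8B)·Y/(3X²+4A)²)` maps the genus-2 curve
`C : Y² = −(3X²+4A)(X³+AX+B)` into `E₀`: the images satisfy `y² = x³ + Ax + B`. -/
theorem psi1_maps_into_E0 {K : Type*} [Field K] [CharZero K]
    (A B X Y : K) (hA : A ≠ 0) (hδ : 4 * A ^ 3 + 27 * B ^ 2 ≠ 0)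
    (hC : Y ^ 2 = -(3 * X ^ 2 + 4 * A) * (X ^ 3 + A * X + B))
    (hden : 3 * X ^ 2 + 4 * A ≠ 0) :
    ((X ^ 3 + 4 * A * X - 8 * B) * Y / (3 * X ^ 2 + 4 * A) ^ 2) ^ 2
      = (-(X ^ 3 + 4 * B) / (3 * X ^ 2 + 4 * A)) ^ 3
        + A * (-(X ^ 3 + 4 * B) / (3 * X ^ 2 + 4 * A)) + B :=
  psi1_maps_into_E0_general A B X Y hC hden
end

section
/- Let E₀: y² = x³ + Ax + B with A ≠ 0, δ = 4A³+27B² ≠ 0, j(E₀) its j-invariant, and let F₀ be the elliptic curve δy² = x³ − δx − 2Bδ. Then j(F₀)/1728 = 1728/j(E₀), provided j(E₀) ≠ 0. -/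
/-! With `δ = 4A³ + 27B²`, the companion curve has `4a³ + 27b² = -16A³/δ⁴`, hence
`j(F₀) = 1728·δ/(4A³)` and `j(F₀)·j(E₀) = 1728²`. -/

namespace ShortWeierstrass

variable {K : Type*} [Field K]

/-- The quantity `4a³ + 27b²`, which is `-Δ/16` for the curve `y² = x³ + ax + b`. -/
def disc (a b : K) : K := 4 * a ^ 3 + 27 * b ^ 2

def jInv (a b : K) : K := 1728 * (4 * a ^ 3) / disc a b

/-- Coefficients of `y² = x³ - x/δ - 2B/δ²`, the scaled form of `δy² = x³ - δx - 2Bδ`. -/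
def companion (A B : K) : K × K := (-(1 / disc A B), -(2 * B / disc A B ^ 2))

theorem disc_companion {A B : K} (hδ : disc A B ≠ 0) :
    disc (companion A B).1 (companion A B).2 = -(16 * A ^ 3) / disc A B ^ 4 := by
  simp only [companion, disc] at hδ ⊢
  field_simp
  ring

theorem jInv_companion_mul_jInv [CharZero K] {A B : K} (hA : A ≠ 0) (hδ : disc A B ≠ 0) :
    jInv (companion A B).1 (companion A B).2 * jInv A B = 1728 ^ 2 := by
  rw [jInv, jInv, disc_companion hδ]
  simp only [companion]
  field_simp
  ring

end ShortWeierstrass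

open ShortWeierstrass in
theorem j_invariant_relation_general {K : Type*} [Field K] [CharZero K]
    (A B : K) (hA : A ≠ 0) (hδ : 4 * A ^ 3 + 27 * B ^ 2 ≠ 0) :
    (1728 * (4 * (-(1 / (4 * A ^ 3 + 27 * B ^ 2))) ^ 3)
        / (4 * (-(1 / (4 * A ^ 3 + 27 * B ^ 2))) ^ 3
            + 27 * (-(2 * B / (4 * A ^ 3 + 27 * B ^ 2) ^ 2)) ^ 2)) / 1728
      = 1728 / (1728 * (4 * A ^ 3) / (4 * A ^ 3 + 27 * B ^ 2)) := by
  have hjE : jInv A B ≠ 0 := div_ne_zero (by simpa using hA) hδ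
  change jInv (companion A B).1 (companion A B).2 / 1728 = 1728 / jInv A B
  rw [div_eq_div_iff (by norm_num) hjE, jInv_companion_mul_jInv hA hδ, sq]

/-- Let `E₀ : y² = x³ + Ax + B` with `A ≠ 0` and `δ = 4A³ + 27B² ≠ 0`, with
`j(E₀) = 1728·4A³/δ`.  The curve `F₀ : δy² = x³ − δx − 2Bδ` is isomorphic via scaling
to the Weierstrass curve `y² = x³ − (1/δ)x − (2B/δ²)`, whose `j`-invariant (computed
by the formula `j = 1728·4a³/(4a³+27b²)` for `y² = x³ + ax + b`) is `j(F₀)`.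
Then `j(F₀)/1728 = 1728/j(E₀)`, provided `j(E₀) ≠ 0`. -/
theorem j_invariant_relation {K : Type*} [Field K] [CharZero K]
    (A B : K) (hA : A ≠ 0) (hδ : 4 * A ^ 3 + 27 * B ^ 2 ≠ 0)
    (hjE : 1728 * (4 * A ^ 3) / (4 * A ^ 3 + 27 * B ^ 2) ≠ 0) :
    (1728 * (4 * (-(1 / (4 * A ^ 3 + 27 * B ^ 2))) ^ 3)
        / (4 * (-(1 / (4 * A ^ 3 + 27 * B ^ 2))) ^ 3
            + 27 * (-(2 * B / (4 * A ^ 3 + 27 * B ^ 2) ^ 2)) ^ 2)) / 1728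
      = 1728 / (1728 * (4 * A ^ 3) / (4 * A ^ 3 + 27 * B ^ 2)) :=
  j_invariant_relation_general A B hA hδ
end
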